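/- Let Σ* = Σᵢ₌₁ᵏ λᵢ uᵢ uᵢᵀ with orthonormal u₁,…,u_k and λ₁ ≥ … ≥ λ_k > 0, U* = Σᵢ uᵢ uᵢᵀ, and let P be an orthogonal projection in ℝ^{d×d}. Define Δ = k - tr(U* P). Then tr(U* P Σ* (I - P)) ≥ λ_k · Δ · (1 - Δ). -/
import Mathlib
open Matrix

lemma vmv_mul {d : ℕ} (a b : Fin d → ℝ) (M : Matrix (Fin d) (Fin d) ℝ) :
    vecMulVec a b * M = vecMulVec a (Mᵀ *ᵥ b) := by
  ext i j
  simp [mul_apply, vecMulVec_apply, mulVec, dotProduct, Finset.mul_sum, transpose_apply]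
  exact Finset.sum_congr rfl fun x _ => by ring

lemma vmv_vmv {d : ℕ} (a b c e : Fin d → ℝ) :
    vecMulVec a b * vecMulVec c e = (b ⬝ᵥ c) • vecMulVec a e := by
  ext i j
  simp [mul_apply, vecMulVec_apply, dotProduct, Finset.sum_mul, Finset.mul_sum]
  exact Finset.sum_congr rfl fun x _ => by ring

lemma trace_vmv {d : ℕ} (a b : Fin d → ℝ) : (vecMulVec a b).trace = a ⬝ᵥ b := by
  simp [trace, diag, vecMulVec_apply, dotProduct]


lemma sum_dp {d : ℕ} {ι : Type*} (s : Finset ι) (f : ι → Fin d → ℝ) (b : Fin d → ℝ) :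
    (∑ i ∈ s, f i) ⬝ᵥ b = ∑ i ∈ s, f i ⬝ᵥ b := by
  simp only [dotProduct, Finset.sum_apply, Finset.sum_mul]
  rw [Finset.sum_comm]

lemma dp_sum {d : ℕ} {ι : Type*} (s : Finset ι) (b : Fin d → ℝ) (f : ι → Fin d → ℝ) :
    b ⬝ᵥ (∑ i ∈ s, f i) = ∑ i ∈ s, b ⬝ᵥ f i := by
  simp only [dotProduct, Finset.sum_apply, Finset.mul_sum]
  rw [Finset.sum_comm]

theorem stmt6 (d k : ℕ) (hk : 0 < k)
    (u : Fin k → Fin d → ℝ)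
    (hu : ∀ i j, u i ⬝ᵥ u j = if i = j then (1 : ℝ) else 0)
    (lam : Fin k → ℝ) (hpos : ∀ i, 0 < lam i)
    (hmono : ∀ i j : Fin k, i ≤ j → lam j ≤ lam i)
    (Sig Ustar P : Matrix (Fin d) (Fin d) ℝ)
    (hSig : Sig = ∑ i, lam i • vecMulVec (u i) (u i))
    (hUstar : Ustar = ∑ i, vecMulVec (u i) (u i))
    (hPsymm : Pᵀ = P) (hPidem : P * P = P)
    (Δ : ℝ) (hΔ : Δ = (k : ℝ) - (Ustar * P).trace) :
    lam ⟨k - 1, by omega⟩ * Δ * (1 - Δ) ≤ (Ustar * P * Sig * (1 - P)).trace := by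
  have hPs : ∀ x y, P x y = P y x := by
    intro x y
    conv_lhs => rw [← hPsymm, transpose_apply]
  have hadj : ∀ a b : Fin d → ℝ, (P *ᵥ a) ⬝ᵥ b = a ⬝ᵥ (P *ᵥ b) := by
    intro a b
    simp only [dotProduct, mulVec, dotProduct, Finset.sum_mul, Finset.mul_sum]
    rw [Finset.sum_comm]
    refine Finset.sum_congr rfl fun x _ => Finset.sum_congr rfl fun y _ => ?_
    rw [hPs y x]; ring
  have hP2 : ∀ a : Fin d → ℝ, P *ᵥ (P *ᵥ a) = P *ᵥ a := by
    intro a; rw [mulVec_mulVec, hPidem]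
  set p : Fin k → Fin k → ℝ := fun i j => u i ⬝ᵥ (P *ᵥ u j) with hp
  have hpw : ∀ i j, (P *ᵥ u i) ⬝ᵥ (P *ᵥ u j) = p i j := by
    intro i j; rw [hadj, hP2]
  have hps : ∀ i j, p i j = p j i := by
    intro i j
    calc p i j = u i ⬝ᵥ (P *ᵥ u j) := rfl
      _ = (P *ᵥ u j) ⬝ᵥ u i := dotProduct_comm _ _
      _ = u j ⬝ᵥ (P *ᵥ u i) := hadj _ _
  have hwu : ∀ i j, (P *ᵥ u i) ⬝ᵥ u j = p j i := by
    intro i j; rw [hadj]; exact hps i j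
  -- Gram matrix of the residuals
  have hN : ∀ i j, (u i - P *ᵥ u i) ⬝ᵥ (u j - P *ᵥ u j)
      = (if i = j then (1:ℝ) else 0) - p i j := by
    intro i j
    rw [sub_dotProduct, dotProduct_sub, dotProduct_sub, hu, hpw, hwu,
      show u i ⬝ᵥ (P *ᵥ u j) = p i j from rfl, hps j i]
    ring
  set t : Fin k → ℝ := fun i => 1 - p i i with ht
  have htnn : ∀ i, 0 ≤ t i := by
    intro i
    have h := hN i i
    simp only [eq_self_iff_true, if_true] at h
    have : (0:ℝ) ≤ (u i - P *ᵥ u i) ⬝ᵥ (u i - P *ᵥ u i) :=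
      Finset.sum_nonneg fun x _ => mul_self_nonneg _
    rw [h] at this
    simpa [ht] using this
  have hCS : ∀ i j, ((if i = j then (1:ℝ) else 0) - p i j)^2 ≤ t i * t j := by
    intro i j
    have h1 := hN i i; have h2 := hN j j
    simp only [eq_self_iff_true, if_true] at h1 h2
    have e1 : t i = (u i - P *ᵥ u i) ⬝ᵥ (u i - P *ᵥ u i) := by rw [h1]
    have e2 : t j = (u j - P *ᵥ u j) ⬝ᵥ (u j - P *ᵥ u j) := by rw [h2]
    rw [← hN i j, e1, e2]
    have := Finset.sum_mul_sq_le_sq_mul_sq Finset.univ (u i - P *ᵥ u i) (u j - P *ᵥ u j)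
    calc ((u i - P *ᵥ u i) ⬝ᵥ (u j - P *ᵥ u j))^2
        = (∑ x, (u i - P *ᵥ u i) x * (u j - P *ᵥ u j) x)^2 := rfl
      _ ≤ (∑ x, (u i - P *ᵥ u i) x ^ 2) * (∑ x, (u j - P *ᵥ u j) x ^ 2) := this
      _ = _ := by simp [dotProduct, sq]
  -- trace of Ustar * P
  have htr1 : (Ustar * P).trace = ∑ i, p i i := by
    rw [hUstar, Finset.sum_mul, trace_sum]
    refine Finset.sum_congr rfl fun i _ => ?_
    rw [vmv_mul, hPsymm, trace_vmv]
  have hΔt : Δ = ∑ i, t i := by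
    rw [hΔ, htr1, ht, Finset.sum_sub_distrib]
    simp
  -- the main trace
  have htr2 : (Ustar * P * Sig * (1 - P)).trace
      = ∑ j, ∑ i, lam i * (p i j * ((if i = j then (1:ℝ) else 0) - p j i)) := by
    have hA : Ustar * P = ∑ j, vecMulVec (u j) (P *ᵥ u j) := by
      rw [hUstar, Finset.sum_mul]
      exact Finset.sum_congr rfl fun j _ => by rw [vmv_mul, hPsymm]
    have hB : Ustar * P * Sig = ∑ j, ∑ i, (lam i * p i j) • vecMulVec (u j) (u i) := by
      rw [hA, hSig, Finset.sum_mul]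
      refine Finset.sum_congr rfl fun j _ => ?_
      rw [Finset.mul_sum]
      refine Finset.sum_congr rfl fun i _ => ?_
      rw [Algebra.mul_smul_comm, vmv_vmv, hwu j i, smul_smul]
    rw [hB, Finset.sum_mul, trace_sum]
    refine Finset.sum_congr rfl fun j _ => ?_
    rw [Finset.sum_mul, trace_sum]
    refine Finset.sum_congr rfl fun i _ => ?_
    rw [smul_mul_assoc, trace_smul, vmv_mul, trace_vmv, smul_eq_mul]
    have h2 : (1 - P)ᵀ *ᵥ u i = u i - P *ᵥ u i := by
      rw [transpose_sub, transpose_one, hPsymm, sub_mulVec, one_mulVec]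
    rw [h2]
    have h3 : u j ⬝ᵥ (u i - P *ᵥ u i) = (if i = j then (1:ℝ) else 0) - p j i := by
      rw [dotProduct_sub, hu, show u j ⬝ᵥ (P *ᵥ u i) = p j i from rfl]
      simp [eq_comm]
    rw [h3]; ring
  -- Bessel: s i := p i i - ∑ j (p i j * p j i) ≥ 0
  set s : Fin k → ℝ := fun i => p i i - ∑ j, p i j * p j i with hs
  have hsnn : ∀ i, 0 ≤ s i := by
    intro i
    have hrr : (P *ᵥ u i - ∑ j, p j i • u j) ⬝ᵥ (P *ᵥ u i - ∑ j, p j i • u j)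
        = p i i - ∑ j, p j i * p j i := by
      rw [sub_dotProduct, dotProduct_sub, dotProduct_sub, sum_dp, sum_dp, dp_sum]
      have e1 : (P *ᵥ u i) ⬝ᵥ (P *ᵥ u i) = p i i := hpw i i
      have e2 : ∀ j, (P *ᵥ u i) ⬝ᵥ (p j i • u j) = p j i * p j i := by
        intro j
        rw [dotProduct_smul, smul_eq_mul, hwu]
      have e3 : ∀ j, (p j i • u j) ⬝ᵥ (P *ᵥ u i) = p j i * p j i := by
        intro j
        rw [smul_dotProduct, smul_eq_mul, show u j ⬝ᵥ (P *ᵥ u i) = p j i from rfl]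
      have e4 : (∑ j, (p j i • u j) ⬝ᵥ (∑ l, p l i • u l)) = ∑ j, p j i * p j i := by
        refine Finset.sum_congr rfl fun j _ => ?_
        rw [dp_sum]
        have h5 : ∀ l, (p j i • u j) ⬝ᵥ (p l i • u l)
            = p j i * p l i * (if j = l then (1:ℝ) else 0) := by
          intro l
          rw [smul_dotProduct, dotProduct_smul, hu]
          simp [mul_assoc, mul_comm, mul_left_comm]
        simp only [h5, mul_ite, mul_one, mul_zero, Finset.sum_ite_eq, Finset.mem_univ,
          if_true]
      rw [e1, e4, Finset.sum_congr rfl fun j _ => e2 j, Finset.sum_congr rfl fun j _ => e3 j]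
      ring
    have hnn : (0:ℝ) ≤ (P *ᵥ u i - ∑ j, p j i • u j) ⬝ᵥ (P *ᵥ u i - ∑ j, p j i • u j) :=
      Finset.sum_nonneg fun x _ => mul_self_nonneg _
    rw [hrr] at hnn
    have : ∑ j, p j i * p j i = ∑ j, p i j * p j i :=
      Finset.sum_congr rfl fun j _ => by rw [hps j i]
    rw [this] at hnn
    simpa [hs] using hnn
  -- rewrite trace as ∑ i, lam i * s i
  have htr3 : (Ustar * P * Sig * (1 - P)).trace = ∑ i, lam i * s i := by
    rw [htr2, Finset.sum_comm]
    refine Finset.sum_congr rfl fun i _ => ?_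
    have e : ∀ j, lam i * (p i j * ((if i = j then (1:ℝ) else 0) - p j i))
        = (if i = j then lam i * p i j else 0) - lam i * (p i j * p j i) := by
      intro j
      by_cases h : i = j
      · subst h; simp; ring
      · simp [h]
    rw [Finset.sum_congr rfl fun j _ => e j, Finset.sum_sub_distrib,
      Finset.sum_ite_eq Finset.univ i (fun j => lam i * p i j)]
    simp only [Finset.mem_univ, if_true, hs, mul_sub, Finset.mul_sum]
  -- pointwise s in terms of t and N
  have hst : ∀ i, s i = t i - ∑ j, ((if i = j then (1:ℝ) else 0) - p i j)^2 := by
    intro i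
    have e : ∀ j, ((if i = j then (1:ℝ) else 0) - p i j)^2
        = (if i = j then (1:ℝ) else 0) - (if i = j then 2 * p i j else 0) + p i j * p j i := by
      intro j
      by_cases h : i = j
      · subst h; simp; ring
      · simp [h, sq, hps i j]
    rw [Finset.sum_congr rfl fun j _ => e j, Finset.sum_add_distrib, Finset.sum_sub_distrib,
      Finset.sum_ite_eq Finset.univ i (fun _ => (1:ℝ)),
      Finset.sum_ite_eq Finset.univ i (fun j => 2 * p i j)]
    simp only [Finset.mem_univ, if_true, hs, ht]
    ring
  -- key inequality
  have key : Δ - Δ^2 ≤ ∑ i, s i := by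
    have h1 : ∑ i, s i = (∑ i, t i) - ∑ i, ∑ j, ((if i = j then (1:ℝ) else 0) - p i j)^2 := by
      rw [Finset.sum_congr rfl fun i _ => hst i, Finset.sum_sub_distrib]
    have h2 : ∑ i, ∑ j, ((if i = j then (1:ℝ) else 0) - p i j)^2 ≤ ∑ i, ∑ j, t i * t j :=
      Finset.sum_le_sum fun i _ => Finset.sum_le_sum fun j _ => hCS i j
    have h3 : ∑ i : Fin k, ∑ j : Fin k, t i * t j = (∑ i, t i) * (∑ j, t j) := by
      rw [Finset.sum_mul]
      exact Finset.sum_congr rfl fun i _ => by rw [Finset.mul_sum]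
    rw [h1, hΔt, sq]
    rw [h3] at h2
    linarith
  -- final chain
  set L : Fin k := ⟨k - 1, by omega⟩ with hL
  have hlamL : ∀ i, L ≤ i → lam i ≤ lam L := fun i h => hmono L i h
  have hLle : ∀ i : Fin k, lam L ≤ lam i := by
    intro i
    refine hmono i L ?_
    have := i.isLt
    simp only [hL, Fin.le_def]
    omega
  rw [htr3]
  calc lam L * Δ * (1 - Δ) = lam L * (Δ - Δ^2) := by ring
    _ ≤ lam L * ∑ i, s i := mul_le_mul_of_nonneg_left key (hpos L).le
    _ = ∑ i, lam L * s i := Finset.mul_sum _ _ _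
    _ ≤ ∑ i, lam i * s i :=
        Finset.sum_le_sum fun i _ => mul_le_mul_of_nonneg_right (hLle i) (hsnn i)
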